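/- Let I be a finite index set, let w : I → ℝ satisfy w j > 0 for all j ∈ I and ∑_{j ∈ I} w j = 1, let w' : I → ℝ satisfy w' i ≥ 0 for all i ∈ I, let p : I → ℝ satisfy p i > 0 for all i ∈ I, let q : I × I → ℝ satisfy 0 < q i j ≤ m for all i, j ∈ I, and let A ⊆ A' ⊆ I. Then −∑_{i ∈ A} w' i · log(p i · ∑_{j ∈ I} q i j · w j) − ∑_{i ∈ I \ A} w' i · log(m · p i) ≤ −∑_{i ∈ A'} w' i · log(p i · ∑_{j ∈ I} q i j · w j) − ∑_{i ∈ I \ A'} w' i · log(m · p i). That is, the Theorem 3 lower bound on term (b) is monotonically nondecreasing in the simplification level (Assumption 1 holds for this bound). -/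

import Mathlib

/-!
Since `∑ j, q i j * w j` is a convex combination of values `≤ m`, each term
`w' i * log (p i * ∑ j, q i j * w j)` is at most `w' i * log (m * p i)`; enlarging `A` swaps
the latter for the former on `A' \ A`, which can only decrease the subtracted sum.
-/

open Finset Real

theorem antitone_sum_add_sum_compl {ι M : Type*} [Fintype ι] [DecidableEq ι]
    [AddCommMonoid M] [PartialOrder M] [IsOrderedAddMonoid M] {f g : ι → M} (hfg : f ≤ g) :
    Antitone fun A : Finset ι => ∑ i ∈ A, f i + ∑ i ∈ univ \ A, g i := by
  intro A A' hAA'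
  have hpiecewise (B : Finset ι) :
      ∑ i ∈ B, f i + ∑ i ∈ univ \ B, g i = ∑ i, B.piecewise f g i := by
    rw [sum_piecewise, univ_inter]
  simp only [hpiecewise]
  refine sum_le_sum fun i _ => ?_
  by_cases hA : i ∈ A
  · simp [hA, hAA' hA]
  · by_cases hA' : i ∈ A' <;> simp [hA, hA', hfg i]

theorem sum_mul_le_of_le_of_sum_eq_one {ι : Type*} {s : Finset ι} {q w : ι → ℝ} {m : ℝ}
    (hw : ∀ j ∈ s, 0 ≤ w j) (hwsum : ∑ j ∈ s, w j = 1) (hqm : ∀ j ∈ s, q j ≤ m) :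
    ∑ j ∈ s, q j * w j ≤ m :=
  calc ∑ j ∈ s, q j * w j ≤ ∑ j ∈ s, m * w j :=
        sum_le_sum fun j hj => mul_le_mul_of_nonneg_right (hqm j hj) (hw j hj)
    _ = m := by rw [← mul_sum, hwsum, mul_one]

theorem log_mul_sum_mul_le_log_mul {ι : Type*} [Fintype ι] {q w : ι → ℝ} {p m : ℝ}
    (hw : ∀ j, 0 < w j) (hwsum : ∑ j, w j = 1) (hp : 0 < p)
    (hq : ∀ j, 0 < q j) (hqm : ∀ j, q j ≤ m) :
    log (p * ∑ j, q j * w j) ≤ log (m * p) := by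
  have hne : (univ : Finset ι).Nonempty :=
    nonempty_of_sum_ne_zero (hwsum ▸ one_ne_zero)
  refine log_le_log (mul_pos hp (sum_pos (fun j _ => mul_pos (hq j) (hw j)) hne)) ?_
  rw [mul_comm m]
  exact mul_le_mul_of_nonneg_left
    (sum_mul_le_of_le_of_sum_eq_one (fun j _ => (hw j).le) hwsum fun j _ => hqm j) hp.le

/-- The Theorem 3 lower bound on term (b) is monotonically nondecreasing in
the simplification level (Assumption 1 holds for this bound). -/
theorem stmt_11 {I : Type*} [Fintype I] [DecidableEq I]
    (w w' p : I → ℝ) (q : I → I → ℝ) (m : ℝ)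
    (hw : ∀ j, 0 < w j) (hwsum : ∑ j, w j = 1)
    (hw' : ∀ i, 0 ≤ w' i)
    (hp : ∀ i, 0 < p i)
    (hq : ∀ i j, 0 < q i j) (hqm : ∀ i j, q i j ≤ m)
    (A A' : Finset I) (hAA' : A ⊆ A') :
    (-∑ i ∈ A, w' i * Real.log (p i * ∑ j, q i j * w j))
        - ∑ i ∈ Finset.univ \ A, w' i * Real.log (m * p i) ≤
      (-∑ i ∈ A', w' i * Real.log (p i * ∑ j, q i j * w j))
        - ∑ i ∈ Finset.univ \ A', w' i * Real.log (m * p i) := by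
  have hterm : (fun i => w' i * log (p i * ∑ j, q i j * w j)) ≤ fun i => w' i * log (m * p i) :=
    fun i => mul_le_mul_of_nonneg_left
      (log_mul_sum_mul_le_log_mul hw hwsum (hp i) (hq i) (hqm i)) (hw' i)
  have := antitone_sum_add_sum_compl hterm hAA'
  simp only at this
  linarith
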